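/- Let R be an algebraic curvature tensor on a 3-dimensional real inner product space E and let {v₁, v₂, v₃} be an orthonormal basis of E diagonalizing the Ricci form of R. If for each i ∈ {1,2,3} there exists a nonzero vector w orthogonal to v_i with R(w, v_i)v_i = 0, then at least two of the three sectional curvatures sec(v₁∧v₂), sec(v₁∧v₃), sec(v₂∧v₃) vanish, where sec(v_i∧v_j) = R(v_i, v_j, v_j, v_i). -/
import Mathlib


open scoped RealInnerProductSpace

/-- An algebraic curvature tensor on a real inner product space `E`: a multilinear map
`R : E × E × E × E → ℝ` with the symmetries of the Riemann curvature tensor.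
For vectors `x y z`, the value `R x y z ·` represents the linear functional
`w ↦ ⟨R(x,y)z, w⟩` determined by the curvature operator `R(x,y)z`. -/
structure AlgCurvTensor (E : Type*) [NormedAddCommGroup E] [InnerProductSpace ℝ E] where
  R : E →ₗ[ℝ] E →ₗ[ℝ] E →ₗ[ℝ] E →ₗ[ℝ] ℝ
  antisym_fst : ∀ x y z w : E, R x y z w = - R y x z w
  antisym_snd : ∀ x y z w : E, R x y z w = - R x y w z
  pair_symm : ∀ x y z w : E, R x y z w = R z w x y
  bianchi : ∀ x y z w : E, R x y z w + R y z x w + R z x y w = 0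

/-- The Ricci form `Ric(x,y) = Σᵢ R(eᵢ, x, y, eᵢ)`, computed in the orthonormal basis `b`
(the result is independent of the choice of orthonormal basis). -/
noncomputable def AlgCurvTensor.ricci {E : Type*} [NormedAddCommGroup E]
    [InnerProductSpace ℝ E] (T : AlgCurvTensor E) (b : OrthonormalBasis (Fin 3) ℝ E)
    (x y : E) : ℝ :=
  ∑ i : Fin 3, T.R (b i) x y (b i)

section Aux
variable {E : Type*} [NormedAddCommGroup E] [InnerProductSpace ℝ E]

lemma AlgCurvTensor.zero_fst (T : AlgCurvTensor E) (x z w : E) : T.R x x z w = 0 := by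
  have := T.antisym_fst x x z w; linarith

lemma AlgCurvTensor.zero_snd (T : AlgCurvTensor E) (x y z : E) : T.R x y z z = 0 := by
  have := T.antisym_snd x y z z; linarith

lemma fin3_univ (i j k : Fin 3) (hij : i ≠ j) (hik : i ≠ k) (hjk : j ≠ k) :
    (Finset.univ : Finset (Fin 3)) = {i, j, k} := by
  symm
  apply Finset.eq_univ_iff_forall.mpr
  intro m
  simp only [Finset.mem_insert, Finset.mem_singleton]
  omega

lemma AlgCurvTensor.mixed (T : AlgCurvTensor E) (b : OrthonormalBasis (Fin 3) ℝ E)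
    (hdiag : ∀ i j : Fin 3, i ≠ j → T.ricci b (b i) (b j) = 0)
    (i j k : Fin 3) (hij : i ≠ j) (hik : i ≠ k) (hjk : j ≠ k) :
    T.R (b i) (b j) (b k) (b i) = 0 := by
  have h := hdiag j k hjk
  unfold AlgCurvTensor.ricci at h
  rw [fin3_univ i j k hij hik hjk] at h
  rw [Finset.sum_insert (by simp [hij, hik]), Finset.sum_insert (by simp [hjk]),
    Finset.sum_singleton] at h
  rw [T.zero_fst, T.zero_snd] at h
  linarith

lemma AlgCurvTensor.key (T : AlgCurvTensor E) (b : OrthonormalBasis (Fin 3) ℝ E)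
    (hdiag : ∀ i j : Fin 3, i ≠ j → T.ricci b (b i) (b j) = 0)
    (hker : ∀ i : Fin 3, ∃ w : E, w ≠ 0 ∧ ⟪b i, w⟫ = 0 ∧ ∀ u : E, T.R w (b i) (b i) u = 0)
    (i j k : Fin 3) (hij : i ≠ j) (hik : i ≠ k) (hjk : j ≠ k) :
    T.R (b j) (b i) (b i) (b j) = 0 ∨ T.R (b k) (b i) (b i) (b k) = 0 := by
  obtain ⟨w, hw0, hperp, hR⟩ := hker i
  have hrepr := b.sum_repr' w
  have hexp : ∀ u : E, ∑ m : Fin 3, ⟪b m, w⟫ * T.R (b m) (b i) (b i) u = 0 := by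
    intro u
    have h := hR u
    rw [← hrepr] at h
    simpa [map_sum, LinearMap.sum_apply, LinearMap.smul_apply, smul_eq_mul] using h
  have hsum : ∀ u : E, ⟪b j, w⟫ * T.R (b j) (b i) (b i) u
      + ⟪b k, w⟫ * T.R (b k) (b i) (b i) u = 0 := by
    intro u
    have h := hexp u
    rw [fin3_univ i j k hij hik hjk] at h
    rw [Finset.sum_insert (by simp [hij, hik]), Finset.sum_insert (by simp [hjk]),
      Finset.sum_singleton, hperp] at h
    linarith
  have hm1 : T.R (b k) (b i) (b i) (b j) = 0 := by
    rw [T.pair_symm]; exact T.mixed b hdiag i j k hij hik hjk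
  have hm2 : T.R (b j) (b i) (b i) (b k) = 0 := by
    rw [T.pair_symm]; exact T.mixed b hdiag i k j hik hij (Ne.symm hjk)
  have hj := hsum (b j); rw [hm1] at hj
  have hk := hsum (b k); rw [hm2] at hk
  have hne : ⟪b j, w⟫ ≠ 0 ∨ ⟪b k, w⟫ ≠ 0 := by
    by_contra hc
    push_neg at hc
    apply hw0
    rw [← hrepr, fin3_univ i j k hij hik hjk,
      Finset.sum_insert (by simp [hij, hik]), Finset.sum_insert (by simp [hjk]),
      Finset.sum_singleton, hperp, hc.1, hc.2]
    simp
  rcases hne with h | h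
  · left
    have := mul_eq_zero.mp (by linarith : ⟪b j, w⟫ * T.R (b j) (b i) (b i) (b j) = 0)
    tauto
  · right
    have := mul_eq_zero.mp (by linarith : ⟪b k, w⟫ * T.R (b k) (b i) (b i) (b k) = 0)
    tauto

end Aux

/-- Let `{v₁, v₂, v₃}` be an orthonormal basis diagonalizing the Ricci form of an algebraic
curvature tensor `R` on a `3`-dimensional inner product space. If for each `i` there is a
nonzero `w ⟂ vᵢ` with `R(w, vᵢ)vᵢ = 0` (expressed by the vanishing of all inner products
`⟨R(w,vᵢ)vᵢ, u⟩ = R w vᵢ vᵢ u`), then at least two of the three sectional curvatures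
`sec(v₁∧v₂)`, `sec(v₁∧v₃)`, `sec(v₂∧v₃)` vanish. -/
theorem two_sectional_curvatures_vanish {E : Type*} [NormedAddCommGroup E]
    [InnerProductSpace ℝ E] (b : OrthonormalBasis (Fin 3) ℝ E) (T : AlgCurvTensor E)
    (hdiag : ∀ i j : Fin 3, i ≠ j → T.ricci b (b i) (b j) = 0)
    (hker : ∀ i : Fin 3, ∃ w : E, w ≠ 0 ∧ ⟪b i, w⟫ = 0 ∧ ∀ u : E, T.R w (b i) (b i) u = 0) :
    (T.R (b 0) (b 1) (b 1) (b 0) = 0 ∧ T.R (b 0) (b 2) (b 2) (b 0) = 0) ∨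
    (T.R (b 0) (b 1) (b 1) (b 0) = 0 ∧ T.R (b 1) (b 2) (b 2) (b 1) = 0) ∨
    (T.R (b 0) (b 2) (b 2) (b 0) = 0 ∧ T.R (b 1) (b 2) (b 2) (b 1) = 0) := by
  have h0 := T.key b hdiag hker 0 1 2 (by decide) (by decide) (by decide)
  have h1 := T.key b hdiag hker 1 0 2 (by decide) (by decide) (by decide)
  have h2 := T.key b hdiag hker 2 0 1 (by decide) (by decide) (by decide)
  rw [T.pair_symm (b 1), T.pair_symm (b 2)] at h0
  rw [T.pair_symm (b 2)] at h1
  tauto
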